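/- For every real α > 0 and all x, y ∈ (−π, 0) with x ≠ y, one has K_α(x − y) > K_α(x + y). -/

import Mathlib

/-!
Off `2πℤ`, `K_α(z)` is the integral of `t ^ (α - 1)` against `(eᵗ c - 1) / (1 - 2 eᵗ c + e²ᵗ)`
with `c = cos z`. For `eᵗ > 1` this quotient is strictly increasing in `c < 1` (its derivative
in `c` is `eᵗ (e²ᵗ - 1)` over the squared denominator), and it decays like `e⁻ᵗ`, so the integral
is finite and strictly increasing in `c ∈ [-1, 1)`. Finally
`cos (x - y) - cos (x + y) = 2 sin x sin y > 0` for `x, y ∈ (-π, 0)`.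
-/

open Real MeasureTheory Set Filter Topology

/-- The periodic convolution kernel `K_α`: equal to the explicit integral
representation for `x ∉ 2πℤ` and to `0` on `2πℤ`. -/
noncomputable def Kker (α x : ℝ) : ℝ :=
  letI : Decidable (∃ k : ℤ, x = 2 * π * k) := Classical.propDecidable _
  if ∃ k : ℤ, x = 2 * π * k then 0
  else (1 / (π * Real.Gamma α)) *
    ∫ t in Set.Ioi (0:ℝ),
      t ^ (α - 1) * (Real.exp t * Real.cos x - 1) /
        (1 - 2 * Real.exp t * Real.cos x + Real.exp (2 * t))

theorem MeasureTheory.setIntegral_lt_setIntegral_of_forall_lt {X : Type*} [MeasurableSpace X]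
    {μ : Measure X} {s : Set X} {f g : X → ℝ} (hs : MeasurableSet s) (hμs : μ s ≠ 0)
    (hf : IntegrableOn f s μ) (hg : IntegrableOn g s μ) (hfg : ∀ x ∈ s, f x < g x) :
    ∫ x in s, f x ∂μ < ∫ x in s, g x ∂μ := by
  rw [← sub_pos, ← integral_sub hg hf]
  have hpos : 0 ≤ᵐ[μ.restrict s] fun x => g x - f x :=
    (ae_restrict_iff' hs).2 (Eventually.of_forall fun x hx => (sub_pos.2 (hfg x hx)).le)
  rw [setIntegral_pos_iff_support_of_nonneg_ae hpos (hg.sub hf)]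
  refine lt_of_lt_of_le (pos_iff_ne_zero.2 hμs) (measure_mono fun x hx => ⟨?_, hx⟩)
  exact (sub_pos.2 (hfg x hx)).ne'

lemma one_sub_two_mul_mul_add_sq_pos {u c : ℝ} (hu : 0 < u) (hc : c < 1) :
    0 < 1 - 2 * u * c + u ^ 2 := by
  nlinarith [sq_nonneg (u - 1), mul_pos hu (sub_pos.2 hc)]

lemma one_sub_div_two_mul_le {u c : ℝ} (hu : 0 ≤ u) (hc : c ∈ Icc (-1) 1) :
    (1 - c) / 2 * (1 + u ^ 2) ≤ 1 - 2 * u * c + u ^ 2 := by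
  obtain ⟨hc₁, hc₂⟩ := hc
  -- the difference is `(1 + c) / 2 * (u - 1) ^ 2 + (1 - c) * u`
  nlinarith [mul_nonneg (by linarith : (0:ℝ) ≤ 1 + c) (sq_nonneg (u - 1)),
    mul_nonneg (by linarith : (0:ℝ) ≤ 1 - c) hu]

lemma strictMonoOn_div_one_sub_two_mul_mul_add_sq {u : ℝ} (hu : 1 < u) :
    StrictMonoOn (fun c => (u * c - 1) / (1 - 2 * u * c + u ^ 2)) (Iio 1) := by
  intro c₁ hc₁ c₂ hc₂ h
  have hu₀ : 0 < u := by linarith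
  rw [div_lt_div_iff₀ (one_sub_two_mul_mul_add_sq_pos hu₀ hc₁)
    (one_sub_two_mul_mul_add_sq_pos hu₀ hc₂)]
  have key : (u * c₂ - 1) * (1 - 2 * u * c₁ + u ^ 2) - (u * c₁ - 1) * (1 - 2 * u * c₂ + u ^ 2)
      = (c₂ - c₁) * u * (u ^ 2 - 1) := by ring
  nlinarith [mul_pos (mul_pos (sub_pos.2 h) hu₀) (by nlinarith : 0 < u ^ 2 - 1)]

lemma abs_div_one_sub_two_mul_mul_add_sq_le {u c : ℝ} (hu : 0 < u) (hc : c ∈ Ico (-1) 1) :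
    |(u * c - 1) / (1 - 2 * u * c + u ^ 2)| ≤ 4 / (1 - c) * u⁻¹ := by
  obtain ⟨hc₁, hc₂⟩ := hc
  have hD := one_sub_two_mul_mul_add_sq_pos hu hc₂
  have h1c : 0 < 1 - c := sub_pos.2 hc₂
  rw [abs_div, abs_of_pos hD, div_le_iff₀ hD]
  calc |u * c - 1| ≤ u + 1 := abs_le.2 ⟨by nlinarith, by nlinarith⟩
    _ ≤ 4 / (1 - c) * u⁻¹ * ((1 - c) / 2 * (1 + u ^ 2)) := by
      rw [show 4 / (1 - c) * u⁻¹ * ((1 - c) / 2 * (1 + u ^ 2)) = 2 * (1 + u ^ 2) / u by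
        field_simp; ring, le_div_iff₀ hu]
      nlinarith [sq_nonneg (u - 1)]
    _ ≤ 4 / (1 - c) * u⁻¹ * (1 - 2 * u * c + u ^ 2) := by
      gcongr
      exact one_sub_div_two_mul_le hu.le ⟨hc₁, hc₂.le⟩

noncomputable def kernelIntegrand (α c t : ℝ) : ℝ :=
  t ^ (α - 1) * (exp t * c - 1) / (1 - 2 * exp t * c + exp (2 * t))

lemma kernelIntegrand_eq (α c t : ℝ) :
    kernelIntegrand α c t = t ^ (α - 1) * ((exp t * c - 1) / (1 - 2 * exp t * c + exp t ^ 2)) := by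
  rw [kernelIntegrand, mul_div_assoc, ← exp_nat_mul]
  norm_num

lemma Kker_eq_integral (α : ℝ) {x : ℝ} (hx : ¬∃ k : ℤ, x = 2 * π * k) :
    Kker α x = 1 / (π * Gamma α) * ∫ t in Ioi 0, kernelIntegrand α (cos x) t := by
  rw [Kker, if_neg hx]
  rfl

lemma integrableOn_kernelIntegrand {α c : ℝ} (hα : 0 < α) (hc : c ∈ Ico (-1) 1) :
    IntegrableOn (kernelIntegrand α c) (Ioi 0) := by
  have hcont : ContinuousOn (kernelIntegrand α c) (Ioi 0) := by
    intro t ht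
    have := (one_sub_two_mul_mul_add_sq_pos (exp_pos t) hc.2).ne'
    refine ContinuousAt.continuousWithinAt ?_
    rw [funext (kernelIntegrand_eq α c)]
    fun_prop (disch := first | exact this | exact Or.inl (ne_of_gt ht))
  refine ((GammaIntegral_convergent hα).const_mul (4 / (1 - c))).mono'
    (hcont.aestronglyMeasurable measurableSet_Ioi) ((ae_restrict_iff' measurableSet_Ioi).2 ?_)
  refine Eventually.of_forall fun t (ht : 0 < t) => ?_
  have htα : 0 < t ^ (α - 1) := rpow_pos_of_pos ht _
  rw [kernelIntegrand_eq, norm_mul, Real.norm_of_nonneg htα.le, Real.norm_eq_abs, exp_neg]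
  calc t ^ (α - 1) * |_| ≤ t ^ (α - 1) * (4 / (1 - c) * (exp t)⁻¹) :=
        mul_le_mul_of_nonneg_left (abs_div_one_sub_two_mul_mul_add_sq_le (exp_pos t) hc) htα.le
    _ = 4 / (1 - c) * ((exp t)⁻¹ * t ^ (α - 1)) := by ring

lemma strictMonoOn_integral_kernelIntegrand {α : ℝ} (hα : 0 < α) :
    StrictMonoOn (fun c => ∫ t in Ioi 0, kernelIntegrand α c t) (Ico (-1) 1) := by
  intro c₁ hc₁ c₂ hc₂ h
  refine setIntegral_lt_setIntegral_of_forall_lt measurableSet_Ioi (by simp)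
    (integrableOn_kernelIntegrand hα hc₁) (integrableOn_kernelIntegrand hα hc₂) fun t ht => ?_
  simp only [kernelIntegrand_eq]
  exact mul_lt_mul_of_pos_left
    (strictMonoOn_div_one_sub_two_mul_mul_add_sq (one_lt_exp_iff.2 ht) hc₁.2 hc₂.2 h)
    (rpow_pos_of_pos ht _)

lemma not_exists_eq_two_pi_mul_int {z : ℝ} (h₁ : -(2 * π) < z) (h₂ : z < 2 * π) (h₀ : z ≠ 0) :
    ¬∃ k : ℤ, z = 2 * π * k := by
  rintro ⟨k, rfl⟩
  refine h₀ ((cos_eq_one_iff_of_lt_of_lt h₁ h₂).1 ?_)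
  rw [mul_comm]
  exact cos_int_mul_two_pi k

lemma cos_lt_one_of_ne_zero {z : ℝ} (h₁ : -(2 * π) < z) (h₂ : z < 2 * π) (h₀ : z ≠ 0) :
    cos z < 1 :=
  (cos_le_one z).lt_of_ne (mt (cos_eq_one_iff_of_lt_of_lt h₁ h₂).1 h₀)

lemma cos_add_lt_cos_sub {x y : ℝ} (h : 0 < sin x * sin y) : cos (x + y) < cos (x - y) := by
  rw [cos_add, cos_sub]
  linarith

/-- For `α > 0` and `x, y ∈ (−π, 0)` with `x ≠ y`, one has
`K_α(x − y) > K_α(x + y)`. -/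
theorem statement6 (α : ℝ) (hα : 0 < α) (x y : ℝ)
    (hx : x ∈ Set.Ioo (-π) 0) (hy : y ∈ Set.Ioo (-π) 0) (hxy : x ≠ y) :
    Kker α (x + y) < Kker α (x - y) := by
  obtain ⟨hx₁, hx₂⟩ := hx
  obtain ⟨hy₁, hy₂⟩ := hy
  have hsub₁ : -(2 * π) < x - y := by linarith
  have hsub₂ : x - y < 2 * π := by linarith
  have hsub₀ : x - y ≠ 0 := sub_ne_zero.2 hxy
  have hadd : x + y < 0 := by linarith
  have hcos : cos (x + y) < cos (x - y) := cos_add_lt_cos_sub <|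
    mul_pos_of_neg_of_neg (sin_neg_of_neg_of_neg_pi_lt hx₂ hx₁) (sin_neg_of_neg_of_neg_pi_lt hy₂ hy₁)
  have hcos₁ : cos (x - y) < 1 := cos_lt_one_of_ne_zero hsub₁ hsub₂ hsub₀
  rw [Kker_eq_integral α (not_exists_eq_two_pi_mul_int (by linarith) (by linarith) hadd.ne),
    Kker_eq_integral α (not_exists_eq_two_pi_mul_int hsub₁ hsub₂ hsub₀)]
  have hΓ : 0 < 1 / (π * Gamma α) := by have := Gamma_pos_of_pos hα; positivity
  exact mul_lt_mul_of_pos_left (strictMonoOn_integral_kernelIntegrand hα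
    ⟨neg_one_le_cos _, hcos.trans hcos₁⟩ ⟨neg_one_le_cos _, hcos₁⟩ hcos) hΓ
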